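/- If 2u + v ≤ m - 2 is strengthened to u + v ≤ ⌊m/2⌋ - 1 (with m | q - 1), then the code D(u,v,t,m) over F_q is Euclidean dual-containing: D(u,v,t,m)^{⊥_E} ⊆ D(u,v,t,m). -/
import Mathlib


lemma key_geom {F : Type*} [Field F] (m s : ℕ) (ω : F) (hω : orderOf ω = m)
    (hs0 : 0 < s) (hsm : s < m) : ∑ a : Fin m, ω ^ (s * (a : ℕ)) = 0 := by
  have hne : ω ^ s ≠ 1 := by
    intro h
    have hd := orderOf_dvd_of_pow_eq_one h
    rw [hω] at hd
    exact absurd (Nat.le_of_dvd hs0 hd) (not_le.mpr hsm)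
  have hpow : (ω ^ s) ^ m = 1 := by
    rw [← pow_mul, mul_comm, pow_mul, ← hω, pow_orderOf_eq_one, one_pow]
  simp_rw [pow_mul]
  rw [Fin.sum_univ_eq_sum_range (fun a => (ω ^ s) ^ a), geom_sum_eq hne, hpow,
    sub_self, zero_div]


/-- The parity-check matrix of the code D(u,v,t,m) over F_q. -/
def parityD (m u v t : ℕ) {F : Type*} [Field F] (ζ : Fin t → F) :
    Matrix ((Fin t × Fin u) ⊕ Fin v) (Fin t × Fin m) F :=
  fun r c =>
    match r with
    | Sum.inl (i, j) => if c.1 = i then ζ i ^ ((j.val + 1) * c.2.val) else 0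
    | Sum.inr j => ζ c.1 ^ ((u + j.val + 1) * c.2.val)

/-- if u + v ≤ ⌊m/2⌋ - 1, then D(u,v,t,m) is Euclidean
dual-containing: D(u,v,t,m)^{⊥_E} ⊆ D(u,v,t,m). -/
theorem stmt_13 (p e q m u v t : ℕ) (hp : p.Prime) (he : 0 < e) (hq : q = p ^ e)
    (hq5 : 5 ≤ q) (hm : m ∣ q - 1) (hu : 1 ≤ u) (ht : 1 ≤ t) (hvu : v ≤ u)
    (huv : u + v ≤ m / 2 - 1)
    {F : Type*} [Field F] [Fintype F] [DecidableEq F]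
    (hF : Fintype.card F = q)
    (ζ : Fin t → F) (hζ : ∀ i, orderOf (ζ i) = m) :
    ∀ x : Fin t × Fin m → F,
      (∀ y ∈ LinearMap.ker (parityD m u v t ζ).mulVecLin, ∑ c, x c * y c = 0) →
      x ∈ LinearMap.ker (parityD m u v t ζ).mulVecLin := by
  intro x hx
  have hm4 : 4 ≤ m := by omega
  have hrow : ∀ r', (fun c => parityD m u v t ζ r' c) ∈
      LinearMap.ker (parityD m u v t ζ).mulVecLin := by
    intro r'
    rw [LinearMap.mem_ker]
    funext r
    show ∑ c, parityD m u v t ζ r c * parityD m u v t ζ r' c = 0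
    rw [Fintype.sum_prod_type]
    rcases r with ⟨i, j⟩ | j <;> rcases r' with ⟨i', j'⟩ | j' <;>
      simp only [parityD, ite_mul, mul_ite, zero_mul, mul_zero]
    · -- inl, inl
      by_cases hii : i = i'
      · subst hii
        rw [Finset.sum_eq_single i]
        · simp only [if_pos rfl]
          have : ∀ a : Fin m, ζ i ^ ((j.val + 1) * a.val) * ζ i ^ ((j'.val + 1) * a.val)
              = ζ i ^ (((j.val + 1) + (j'.val + 1)) * a.val) := by
            intro a; rw [← pow_add, ← add_mul]
          simp_rw [this]
          exact key_geom m _ _ (hζ i) (by omega) (by have := j.isLt; have := j'.isLt; omega)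
        · intro b _ hb; simp [hb]
        · simp
      · apply Finset.sum_eq_zero; intro b _
        apply Finset.sum_eq_zero; intro a _
        by_cases hbi : b = i <;> simp [hbi, hii]
    · -- inl, inr
      rw [Finset.sum_eq_single i]
      · simp only [if_pos rfl]
        have : ∀ a : Fin m, ζ i ^ ((j.val + 1) * a.val) * ζ i ^ ((u + j'.val + 1) * a.val)
            = ζ i ^ (((j.val + 1) + (u + j'.val + 1)) * a.val) := by
          intro a; rw [← pow_add, ← add_mul]
        simp_rw [this]
        exact key_geom m _ _ (hζ i) (by omega) (by have := j.isLt; have := j'.isLt; omega)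
      · intro b _ hb; simp [hb]
      · simp
    · -- inr, inl
      rw [Finset.sum_eq_single i']
      · simp only [if_pos rfl]
        have : ∀ a : Fin m, ζ i' ^ ((u + j.val + 1) * a.val) * ζ i' ^ ((j'.val + 1) * a.val)
            = ζ i' ^ (((u + j.val + 1) + (j'.val + 1)) * a.val) := by
          intro a; rw [← pow_add, ← add_mul]
        simp_rw [this]
        exact key_geom m _ _ (hζ i') (by omega) (by have := j.isLt; have := j'.isLt; omega)
      · intro b _ hb; simp [hb]
      · simp
    · -- inr, inr
      apply Finset.sum_eq_zero; intro b _
      have : ∀ a : Fin m, ζ b ^ ((u + j.val + 1) * a.val) * ζ b ^ ((u + j'.val + 1) * a.val)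
          = ζ b ^ (((u + j.val + 1) + (u + j'.val + 1)) * a.val) := by
        intro a; rw [← pow_add, ← add_mul]
      simp_rw [this]
      exact key_geom m _ _ (hζ b) (by omega) (by have := j.isLt; have := j'.isLt; omega)
  rw [LinearMap.mem_ker]
  funext r
  have h := hx _ (hrow r)
  show ∑ c, parityD m u v t ζ r c * x c = 0
  rw [← h]
  exact Finset.sum_congr rfl fun c _ => mul_comm _ _
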